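/- arXiv:q-alg/9710001 — 2 statements merged into one kernel-verified Lean document; each statement's English description precedes it below -/
import Mathlib

section
/- For every i ≥ 1, the Carlitz polynomial e_i(t) = ∏_{m ∈ F_q[x], deg m < i} (t - m) satisfies e_i(t) = Σ_{j=0}^{i} (-1)^{i-j} (D_i / (D_j · L_{i-j}^{q^j})) · t^{q^j}, where D_i = [i][i-1]^q⋯[1]^{q^{i-1}}, L_i = [i][i-1]⋯[1], D_0 = L_0 = 1, and [i] = x^{q^i} - x in F_q[x]. -/
/- STATEMENT 0: For every i ≥ 1, the Carlitz polynomial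
   e_i(t) = ∏_{m ∈ F_q[x], deg m < i} (t - m) satisfies
   e_i(t) = Σ_{j=0}^{i} (-1)^{i-j} (D_i / (D_j · L_{i-j}^{q^j})) · t^{q^j}. -/

noncomputable section

/-- The bracket `[i] = x^{q^i} - x` in `F_q(x)`. -/
def carBr (Fq : Type*) [CommRing Fq] [IsDomain Fq] (q i : ℕ) : RatFunc Fq :=
  RatFunc.X ^ q ^ i - RatFunc.X

/-- `D_0 = 1`, `D_i = [i] D_{i-1}^q`. -/
def carD (Fq : Type*) [CommRing Fq] [IsDomain Fq] (q : ℕ) : ℕ → RatFunc Fq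
  | 0 => 1
  | i + 1 => carBr Fq q (i + 1) * (carD Fq q i) ^ q

/-- `L_0 = 1`, `L_i = [i] L_{i-1}`. -/
def carL (Fq : Type*) [CommRing Fq] [IsDomain Fq] (q : ℕ) : ℕ → RatFunc Fq
  | 0 => 1
  | i + 1 => carBr Fq q (i + 1) * carL Fq q i

/-- The Carlitz polynomial `e_i(t) = ∏_{m ∈ F_q[x], deg m < i} (t - m)`, the product
running over all polynomials of degree `< i`, enumerated by their coefficient tuples. -/
def carE (Fq : Type*) [Field Fq] [Fintype Fq] (i : ℕ) : Polynomial (RatFunc Fq) :=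
  ∏ c : Fin i → Fq,
    (Polynomial.X -
      Polynomial.C (∑ k : Fin i, algebraMap Fq (RatFunc Fq) (c k) * RatFunc.X ^ (k : ℕ)))

/-
Splitting off the top coefficient of `m` gives `e_{i+1}(t) = ∏_{a ∈ 𝔽_q} e_i(t - a x^i)`.
The right-hand side `E_i` of the formula is `𝔽_q`-linear in `t`, so once `e_i = E_i` this
product is `E_i(t)^q - E_i(x^i)^{q-1} E_i(t)`. Coefficient identities resting on
`[j + k] = [j] + [k]^{q^j}` give `E_{i+1} = E_i^q - D_i^{q-1} E_i` and
`E_{i+1}(x t) = x E_{i+1}(t) + [i+1] E_i(t)^q`. If `E_i(x^i) = D_i`, the first shows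
`E_{i+1}(x^i) = 0`, and the second at `t = x^i` then gives `E_{i+1}(x^{i+1}) = D_{i+1}`.
Hence `e_i = E_i` by induction on `i`.
-/

open Polynomial Finset

namespace FiniteField

variable (K : Type*) [Field K] [Fintype K] {R : Type*} [CommRing R] [Algebra K R]

theorem frobeniusAlgHom_pow_apply (n : ℕ) (x : R) :
    (frobeniusAlgHom K R ^ n) x = x ^ Fintype.card K ^ n := by
  rw [AlgHom.coe_pow, coe_frobeniusAlgHom, pow_iterate]

theorem sub_pow_card_pow (x y : R) (n : ℕ) :
    (x - y) ^ Fintype.card K ^ n = x ^ Fintype.card K ^ n - y ^ Fintype.card K ^ n := by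
  simp only [← frobeniusAlgHom_pow_apply K, map_sub]

theorem algebraMap_mul_pow_card_pow (a : K) (x : R) (n : ℕ) :
    (algebraMap K R a * x) ^ Fintype.card K ^ n = algebraMap K R a * x ^ Fintype.card K ^ n := by
  rw [← frobeniusAlgHom_pow_apply K, ← Algebra.smul_def, map_smul, Algebra.smul_def,
    frobeniusAlgHom_pow_apply]

theorem sum_pow_card {ι : Type*} (s : Finset ι) (f : ι → R) :
    (∑ i ∈ s, f i) ^ Fintype.card K = ∑ i ∈ s, f i ^ Fintype.card K :=
  map_sum (frobeniusAlgHom K R) f s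

theorem neg_one_pow_pow_card (n : ℕ) : ((-1 : R) ^ n) ^ Fintype.card K = (-1) ^ n := by
  have h : (-1 : R) ^ Fintype.card K = -1 := by simpa using map_neg (frobeniusAlgHom K R) 1
  rw [← pow_mul, mul_comm, pow_mul, h]

theorem prod_X_sub_C_eq_X_pow_card_sub_X : ∏ a : K, (X - C a) = X ^ Fintype.card K - X := by
  classical
  have hmonic : (X ^ Fintype.card K - X : K[X]).Monic :=
    monic_X_pow_sub (by simpa using Fintype.one_lt_card)
  have hprod := prod_multiset_X_sub_C_of_monic_of_roots_card_eq hmonic (by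
    rw [roots_X_pow_card_sub_X, X_pow_card_sub_X_natDegree_eq K Fintype.one_lt_card]; rfl)
  rw [← hprod, roots_X_pow_card_sub_X, prod_eq_multiset_prod]

theorem prod_sub_algebraMap_mul (u : R) {v : R} (hv : IsUnit v) :
    ∏ a : K, (u - algebraMap K R a * v) = u ^ Fintype.card K - v ^ (Fintype.card K - 1) * u := by
  obtain ⟨v, rfl⟩ := hv
  have h := congrArg (aeval (u * ↑v⁻¹)) (prod_X_sub_C_eq_X_pow_card_sub_X K)
  simp only [map_prod, map_sub, aeval_X, aeval_C, map_pow] at h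
  calc ∏ a : K, (u - algebraMap K R a * v)
      = ∏ a : K, (↑v * (u * ↑v⁻¹ - algebraMap K R a)) := by
        refine prod_congr rfl fun a _ => ?_
        rw [mul_sub, mul_left_comm, Units.mul_inv, mul_one, mul_comm]
    _ = ↑v ^ Fintype.card K * ((u * ↑v⁻¹) ^ Fintype.card K - u * ↑v⁻¹) := by
        rw [prod_mul_distrib, prod_const, card_univ, h]
    _ = u ^ Fintype.card K - ↑v ^ (Fintype.card K - 1) * u := by
        rw [mul_sub, ← mul_pow, mul_left_comm, Units.mul_inv, mul_one,
          ← pow_sub_one_mul Fintype.card_ne_zero (v : R), mul_assoc, mul_left_comm (v : R),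
          Units.mul_inv, mul_one]

theorem sum_C_mul_X_pow_card_pow_comp_X_sub_C (s : Finset ℕ) (c : ℕ → R) (y : R) :
    (∑ j ∈ s, C (c j) * X ^ Fintype.card K ^ j).comp (X - C y) =
      ∑ j ∈ s, C (c j) * X ^ Fintype.card K ^ j -
        C ((∑ j ∈ s, C (c j) * X ^ Fintype.card K ^ j).eval y) := by
  simp only [Polynomial.sum_comp, mul_comp, C_comp, pow_comp, X_comp, sub_pow_card_pow K,
    eval_finsetSum, eval_mul, eval_C, eval_pow, eval_X, map_sum, C_mul, C_pow, mul_sub,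
    sum_sub_distrib]

theorem eval_algebraMap_mul_sum_C_mul_X_pow_card_pow (s : Finset ℕ) (c : ℕ → R) (a : K)
    (y : R) :
    (∑ j ∈ s, C (c j) * X ^ Fintype.card K ^ j).eval (algebraMap K R a * y) =
      algebraMap K R a * (∑ j ∈ s, C (c j) * X ^ Fintype.card K ^ j).eval y := by
  simp only [eval_finsetSum, eval_mul, eval_C, eval_pow, eval_X, algebraMap_mul_pow_card_pow,
    mul_sum, mul_left_comm]

end FiniteField

def carCoeff (Fq : Type*) [CommRing Fq] [IsDomain Fq] (q i j : ℕ) : RatFunc Fq :=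
  (-1) ^ (i - j) * (carD Fq q i / (carD Fq q j * carL Fq q (i - j) ^ q ^ j))

def carPoly (Fq : Type*) [CommRing Fq] [IsDomain Fq] (q i : ℕ) : (RatFunc Fq)[X] :=
  ∑ j ∈ range (i + 1), C (carCoeff Fq q i j) * X ^ q ^ j

section Recursions

variable {Fq : Type*} [CommRing Fq] [IsDomain Fq] {q : ℕ}

theorem carBr_zero : carBr Fq q 0 = 0 := by simp [carBr]

theorem carD_succ (i : ℕ) : carD Fq q (i + 1) = carBr Fq q (i + 1) * carD Fq q i ^ q := rfl

theorem carL_succ (i : ℕ) : carL Fq q (i + 1) = carBr Fq q (i + 1) * carL Fq q i := rfl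

end Recursions

section Coefficients

variable {Fq : Type*} [Field Fq] {q : ℕ}

theorem carBr_ne_zero {j : ℕ} (hq : 1 < q) (hj : j ≠ 0) : carBr Fq q j ≠ 0 := by
  have h : carBr Fq q j = algebraMap Fq[X] (RatFunc Fq) (X ^ q ^ j - X) := by
    rw [map_sub, map_pow, RatFunc.algebraMap_X, carBr]
  rw [h]
  exact RatFunc.algebraMap_ne_zero (FiniteField.X_pow_card_pow_sub_X_ne_zero Fq hj hq)

theorem carD_ne_zero (hq : 1 < q) (i : ℕ) : carD Fq q i ≠ 0 := by
  induction i with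
  | zero => exact one_ne_zero
  | succ i ih => exact mul_ne_zero (carBr_ne_zero hq i.succ_ne_zero) (pow_ne_zero _ ih)

theorem carL_ne_zero (hq : 1 < q) (i : ℕ) : carL Fq q i ≠ 0 := by
  induction i with
  | zero => exact one_ne_zero
  | succ i ih => exact mul_ne_zero (carBr_ne_zero hq i.succ_ne_zero) ih

theorem carCoeff_self (hq : 1 < q) (i : ℕ) : carCoeff Fq q i i = 1 := by
  simp [carCoeff, carL, carD_ne_zero hq i]

theorem carCoeff_succ_zero (hq : 1 < q) (i : ℕ) :
    carCoeff Fq q (i + 1) 0 = -(carD Fq q i ^ (q - 1) * carCoeff Fq q i 0) := by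
  have := carBr_ne_zero (Fq := Fq) hq i.succ_ne_zero
  have := carL_ne_zero (Fq := Fq) hq i
  have hD : carD Fq q i ^ (q - 1) * carD Fq q i = carD Fq q i ^ q := pow_sub_one_mul (by omega) _
  simp only [carCoeff, carD_succ, carL_succ, Nat.sub_zero, pow_zero, pow_one, pow_succ]
  field_simp
  rw [hD]

end Coefficients

section CardFq

variable {Fq : Type*} [Field Fq] [Fintype Fq]

local notation "q" => Fintype.card Fq

theorem carBr_add (j k : ℕ) : carBr Fq q (j + k) = carBr Fq q j + carBr Fq q k ^ q ^ j := by
  rw [carBr, carBr, carBr, FiniteField.sub_pow_card_pow Fq, ← pow_mul, ← pow_add, add_comm k]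
  ring

theorem carCoeff_succ_succ {i k : ℕ} (hk : k < i) :
    carCoeff Fq q (i + 1) (k + 1) =
      carCoeff Fq q i k ^ q - carD Fq q i ^ (q - 1) * carCoeff Fq q i (k + 1) := by
  obtain ⟨m, rfl⟩ := Nat.exists_eq_add_of_lt hk
  have hq := Fintype.one_lt_card (α := Fq)
  have hBr : carBr Fq q (k + m + 1 + 1) =
      carBr Fq q (k + 1) + carBr Fq q (m + 1) ^ q ^ (k + 1) := by
    rw [← carBr_add, show k + 1 + (m + 1) = k + m + 1 + 1 by omega]
  have hD : carD Fq q (k + m + 1) ^ (q - 1) * carD Fq q (k + m + 1) = carD Fq q (k + m + 1) ^ q :=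
    pow_sub_one_mul (by omega) _
  have := carBr_ne_zero (Fq := Fq) hq k.succ_ne_zero
  have := carBr_ne_zero (Fq := Fq) hq m.succ_ne_zero
  have := carD_ne_zero (Fq := Fq) hq k
  have := carL_ne_zero (Fq := Fq) hq m
  simp only [carCoeff, show k + m + 1 + 1 - (k + 1) = m + 1 by omega,
    show k + m + 1 - k = m + 1 by omega, show k + m + 1 - (k + 1) = m by omega]
  rw [mul_pow, FiniteField.neg_one_pow_pow_card, div_pow, mul_pow, ← pow_mul, ← pow_succ,
    carD_succ (k + m + 1), carD_succ k, carL_succ m, hBr]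
  field_simp
  linear_combination (-1) ^ m * (carBr Fq q (m + 1) * carL Fq q m) ^ q ^ (k + 1) * hD

theorem carCoeff_succ_succ_mul_carBr (i k : ℕ) :
    carCoeff Fq q (i + 1) (k + 1) * carBr Fq q (k + 1) =
      carBr Fq q (i + 1) * carCoeff Fq q i k ^ q := by
  have hq := Fintype.one_lt_card (α := Fq)
  have := carBr_ne_zero (Fq := Fq) hq k.succ_ne_zero
  have := carD_ne_zero (Fq := Fq) hq k
  have := carL_ne_zero (Fq := Fq) hq (i - k)
  simp only [carCoeff, Nat.add_sub_add_right]
  rw [mul_pow, FiniteField.neg_one_pow_pow_card, div_pow, mul_pow, ← pow_mul, ← pow_succ,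
    carD_succ i, carD_succ k]
  field_simp

theorem carPoly_succ (i : ℕ) :
    carPoly Fq q (i + 1) = carPoly Fq q i ^ q - C (carD Fq q i ^ (q - 1)) * carPoly Fq q i := by
  have hq := Fintype.one_lt_card (α := Fq)
  have hpow : carPoly Fq q i ^ q =
      ∑ k ∈ range (i + 1), C (carCoeff Fq q i k ^ q) * X ^ q ^ (k + 1) := by
    simp only [carPoly, FiniteField.sum_pow_card, mul_pow, ← C_pow, ← pow_mul, ← pow_succ]
  have hmul : C (carD Fq q i ^ (q - 1)) * carPoly Fq q i =
      ∑ j ∈ range (i + 1), C (carD Fq q i ^ (q - 1) * carCoeff Fq q i j) * X ^ q ^ j := by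
    simp only [carPoly, mul_sum, C_mul, mul_assoc]
  have hmid : ∑ k ∈ range i, C (carCoeff Fq q (i + 1) (k + 1)) * X ^ q ^ (k + 1) =
      ∑ k ∈ range i, C (carCoeff Fq q i k ^ q) * X ^ q ^ (k + 1) -
        ∑ k ∈ range i,
          C (carD Fq q i ^ (q - 1) * carCoeff Fq q i (k + 1)) * X ^ q ^ (k + 1) := by
    rw [← sum_sub_distrib]
    refine sum_congr rfl fun k hk => ?_
    rw [carCoeff_succ_succ (mem_range.mp hk), C_sub, sub_mul]
  rw [hpow, hmul, carPoly, sum_range_succ', sum_range_succ, sum_range_succ (n := i),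
    sum_range_succ' (n := i), hmid, carCoeff_self hq, carCoeff_self hq, carCoeff_succ_zero hq]
  simp only [one_pow, C_neg, neg_mul]
  ring

theorem carPoly_succ_eval_X_mul (i : ℕ) (t : RatFunc Fq) :
    (carPoly Fq q (i + 1)).eval (RatFunc.X * t) =
      RatFunc.X * (carPoly Fq q (i + 1)).eval t +
        carBr Fq q (i + 1) * (carPoly Fq q i).eval t ^ q := by
  have hsplit : ∀ j, carCoeff Fq q (i + 1) j * (RatFunc.X * t) ^ q ^ j =
      RatFunc.X * (carCoeff Fq q (i + 1) j * t ^ q ^ j) +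
        carCoeff Fq q (i + 1) j * carBr Fq q j * t ^ q ^ j := by
    intro j
    rw [mul_pow, carBr]
    ring
  have hpow : (carPoly Fq q i).eval t ^ q =
      ∑ k ∈ range (i + 1), carCoeff Fq q i k ^ q * t ^ q ^ (k + 1) := by
    simp only [carPoly, eval_finsetSum, eval_mul, eval_C, eval_pow, eval_X,
      FiniteField.sum_pow_card, mul_pow, ← pow_mul, ← pow_succ]
  rw [hpow]
  simp only [carPoly, eval_finsetSum, eval_mul, eval_C, eval_pow, eval_X, hsplit, sum_add_distrib,
    mul_sum]
  rw [sum_range_succ' (fun j => carCoeff Fq q (i + 1) j * carBr Fq q j * t ^ q ^ j),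
    carBr_zero, mul_zero, zero_mul, add_zero]
  congr 1
  refine sum_congr rfl fun k _ => ?_
  rw [carCoeff_succ_succ_mul_carBr, mul_assoc]

theorem carPoly_eval_X_pow_self (i : ℕ) :
    (carPoly Fq q i).eval (RatFunc.X ^ i) = carD Fq q i := by
  induction i with
  | zero => simp [carPoly, carCoeff, carD, carL]
  | succ i ih =>
    have hvanish : (carPoly Fq q (i + 1)).eval (RatFunc.X ^ i) = 0 := by
      rw [carPoly_succ, eval_sub, eval_pow, eval_mul, eval_C, ih,
        pow_sub_one_mul Fintype.card_ne_zero, sub_self]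
    rw [pow_succ', carPoly_succ_eval_X_mul, hvanish, ih, mul_zero, zero_add, carD_succ]

theorem carE_succ (i : ℕ) :
    carE Fq (i + 1) =
      ∏ a : Fq, (carE Fq i).comp (X - C (algebraMap Fq (RatFunc Fq) a * RatFunc.X ^ i)) := by
  rw [carE, ← (Fin.snocEquiv fun _ => Fq).prod_comp, Fintype.prod_prod_type]
  refine prod_congr rfl fun a _ => ?_
  rw [carE, Polynomial.prod_comp]
  refine prod_congr rfl fun c _ => ?_
  simp [Fin.sum_univ_castSucc, Fin.snocEquiv, Fin.snoc_castSucc]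
  ring

theorem carE_eq_carPoly (i : ℕ) : carE Fq i = carPoly Fq q i := by
  induction i with
  | zero => simp [carE, carPoly, carCoeff, carD, carL]
  | succ i ih =>
    have hD : IsUnit (C (carD Fq q i)) := isUnit_C.mpr (carD_ne_zero Fintype.one_lt_card i).isUnit
    calc carE Fq (i + 1)
        = ∏ a : Fq, (carPoly Fq q i - algebraMap Fq _ a * C (carD Fq q i)) := by
          rw [carE_succ, ih]
          refine prod_congr rfl fun a _ => ?_
          rw [carPoly, FiniteField.sum_C_mul_X_pow_card_pow_comp_X_sub_C,
            FiniteField.eval_algebraMap_mul_sum_C_mul_X_pow_card_pow, ← carPoly,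
            carPoly_eval_X_pow_self, C_mul, Polynomial.algebraMap_apply]
      _ = carPoly Fq q i ^ q - C (carD Fq q i) ^ (q - 1) * carPoly Fq q i :=
          FiniteField.prod_sub_algebraMap_mul Fq _ hD
      _ = carPoly Fq q (i + 1) := by rw [carPoly_succ, C_pow]

end CardFq

theorem carlitz_e_expansion_general
    (q : ℕ)
    (Fq : Type*) [Field Fq] [Fintype Fq] (hcard : Fintype.card Fq = q)
    (i : ℕ) :
    carE Fq i =
      ∑ j ∈ Finset.range (i + 1),
        Polynomial.C ((-1 : RatFunc Fq) ^ (i - j) *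
            (carD Fq q i / (carD Fq q j * (carL Fq q (i - j)) ^ q ^ j))) *
          Polynomial.X ^ q ^ j := by
  subst hcard
  exact carE_eq_carPoly i

theorem carlitz_e_expansion
    (p γ : ℕ) (hp : p.Prime) (hγ : 0 < γ) (q : ℕ) (hq : q = p ^ γ)
    (Fq : Type*) [Field Fq] [Fintype Fq] (hcard : Fintype.card Fq = q)
    (i : ℕ) (hi : 1 ≤ i) :
    carE Fq i =
      ∑ j ∈ Finset.range (i + 1),
        Polynomial.C ((-1 : RatFunc Fq) ^ (i - j) *
            (carD Fq q i / (carD Fq q j * (carL Fq q (i - j)) ^ q ^ j))) *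
          Polynomial.X ^ q ^ j :=
  carlitz_e_expansion_general q Fq hcard i
end
end

section
/- Let n = α_0 + α_1 q + ⋯ + α_s q^s with 0 ≤ α_k < q. Enumerate F_q = {a_0, …, a_{q−1}} with a_0 = 0, and for each j = Σ β_k q^k set m_j = a_{β_0} + a_{β_1}x + ⋯ ∈ F_q[x]. Then the x-adic valuation of P_n(m_n) = ∏_{j=0}^{n−1}(m_n − m_j) equals l_n = Σ_{k=1}^{s} ((q^k − 1)/(q − 1)) α_k. -/
/-! The `k`-th coefficient of `m_j` is `a` applied to the `k`-th base-`q` digit of `j`, and `a` is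
injective on digits, so `x ^ r ∣ m_n - m_j` iff `n ≡ j [MOD q ^ r]`. Hence
`v_x(m_n - m_j) = v_q(n - j)`, and summing over `j < n` gives `∑_{r ≥ 1} ⌊n / q ^ r⌋` exactly as
in Legendre's formula. Multiplied by `q - 1`, both this sum and `l_n` equal `n` minus the digit
sum of `n`. -/

noncomputable section

/-- `m_j = Σ_k a_{β_k} x^k`, where `β_k` are the base-`q` digits of `j` and
`a : ℕ → Fq` is an enumeration of `F_q`. -/
def mPoly {Fq : Type*} [CommRing Fq] (a : ℕ → Fq) (q j : ℕ) : Polynomial Fq :=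
  ∑ k ∈ Finset.range (Nat.digits q j).length,
    Polynomial.C (a ((Nat.digits q j).getD k 0)) * Polynomial.X ^ k

open Finset Polynomial

namespace Nat

theorem mod_pow_eq_mod_pow_iff {b n j : ℕ} (r : ℕ) :
    n % b ^ r = j % b ^ r ↔ ∀ d < r, n / b ^ d % b = j / b ^ d % b := by
  induction r with
  | zero => simp [mod_one]
  | succ r ih =>
    rw [forall_lt_succ_right, ← ih]
    refine ⟨fun h => ⟨?_, ?_⟩, fun ⟨hlow, hdigit⟩ => ?_⟩
    · simpa [mod_mod_of_dvd _ (pow_dvd_pow b r.le_succ)] using congrArg (· % b ^ r) h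
    · rw [← mod_mul_right_div_self, ← mod_mul_right_div_self j, ← pow_succ, h]
    · rw [mod_pow_succ, mod_pow_succ, hlow, hdigit]

theorem sum_range_multiplicity_sub_eq_sum_div_pow {q n b : ℕ} (hq : q ≠ 1) (hb : log q n < b) :
    ∑ j ∈ range n, multiplicity q (n - j) = ∑ r ∈ Ico 1 b, n / q ^ r := by
  calc ∑ j ∈ range n, multiplicity q (n - j)
      = ∑ j ∈ range n, #{r ∈ Ico 1 b | q ^ r ∣ n - j} := by
        refine sum_congr rfl fun j hj => multiplicity_eq_of_emultiplicity_eq_some ?_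
        have hj : j < n := mem_range.mp hj
        exact emultiplicity_eq_card_pow_dvd hq (by omega)
          ((log_mono_right (sub_le n j)).trans_lt hb)
    _ = ∑ r ∈ Ico 1 b, #{j ∈ range n | q ^ r ∣ n - j} := by
        simp only [card_filter]
        exact sum_comm
    _ = ∑ r ∈ Ico 1 b, n / q ^ r := by
        refine sum_congr rfl fun r _ => ?_
        rw [← Ioc_filter_dvd_card_eq_div, card_filter, card_filter, range_eq_Ico,
          sum_Ico_reflect (fun i => if q ^ r ∣ i then 1 else 0) 0 n.le_succ,
          Nat.add_sub_cancel_left, Nat.sub_zero]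
        rfl

theorem ofDigits_eq_sum_range_getD (b : ℕ) (L : List ℕ) :
    ofDigits b L = ∑ k ∈ range L.length, b ^ k * L.getD k 0 := by
  induction L with
  | nil => simp
  | cons d L ih =>
    simp [ofDigits_cons, sum_range_succ', pow_succ', ih, mul_sum, mul_assoc, add_comm]

theorem sub_one_mul_sum_repunit_mul_digits_eq_sub_sum_digits (b n : ℕ) (hb : 0 < b) :
    (b - 1) * ∑ k ∈ range (b.digits n).length, (b ^ k - 1) / (b - 1) * (b.digits n).getD k 0 =
      n - (b.digits n).sum := by
  set L := b.digits n
  have hweight (k : ℕ) : (b - 1) * ((b ^ k - 1) / (b - 1)) = b ^ k - 1 :=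
    Nat.mul_div_cancel' (b.sub_one_dvd_pow_sub_one k)
  conv_rhs => rw [← ofDigits_digits b n, ← ofDigits_one L, ofDigits_eq_sum_range_getD,
    ofDigits_eq_sum_range_getD]
  rw [← sum_tsub_distrib _ fun k _ => ?_, mul_sum]
  · refine sum_congr rfl fun k _ => ?_
    rw [← mul_assoc, hweight, one_pow, one_mul, Nat.sub_mul, one_mul]
  · rw [one_pow, one_mul]
    exact Nat.le_mul_of_pos_left _ (pow_pos hb k)

end Nat

theorem Polynomial.rootMultiplicity_prod {R ι : Type*} [CommRing R] [IsDomain R] (s : Finset ι)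
    (f : ι → R[X]) (hf : ∏ i ∈ s, f i ≠ 0) (x : R) :
    (∏ i ∈ s, f i).rootMultiplicity x = ∑ i ∈ s, (f i).rootMultiplicity x := by
  classical
  simp only [← count_roots, roots_prod f s hf, Multiset.count_bind]
  rfl

section mPoly

variable {F : Type*} [CommRing F] {a : ℕ → F} {q : ℕ}

theorem coeff_mPoly (ha0 : a 0 = 0) (j k : ℕ) :
    (mPoly a q j).coeff k = a ((q.digits j).getD k 0) := by
  simp only [mPoly, finsetSum_coeff, coeff_C_mul_X_pow, sum_ite_eq, mem_range]
  split_ifs with hk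
  · rfl
  · rw [List.getD_eq_default _ _ (not_lt.mp hk), ha0]

theorem X_pow_dvd_mPoly_sub_iff (hq : 2 ≤ q) (ha0 : a 0 = 0) (ha : Set.InjOn a (Set.Iio q))
    (n j r : ℕ) : X ^ r ∣ mPoly a q n - mPoly a q j ↔ n ≡ j [MOD q ^ r] := by
  rw [X_pow_dvd_iff, Nat.ModEq, Nat.mod_pow_eq_mod_pow_iff]
  refine forall₂_congr fun d _ => ?_
  rw [coeff_sub, coeff_mPoly ha0, coeff_mPoly ha0, Nat.getD_digits _ _ hq, Nat.getD_digits _ _ hq,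
    sub_eq_zero]
  exact ha.eq_iff (Nat.mod_lt _ (by omega)) (Nat.mod_lt _ (by omega))

theorem mPoly_injective (hq : 2 ≤ q) (ha0 : a 0 = 0) (ha : Set.InjOn a (Set.Iio q)) :
    Function.Injective (mPoly a q) := by
  intro n j h
  have hmod := (X_pow_dvd_mPoly_sub_iff hq ha0 ha n j (n + j)).mp
    (by rw [h, sub_self]; exact dvd_zero _)
  have hlt := Nat.lt_pow_self (n := n + j) (by omega : 1 < q)
  rwa [Nat.ModEq, Nat.mod_eq_of_lt (by omega), Nat.mod_eq_of_lt (by omega)] at hmod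

theorem rootMultiplicity_zero_mPoly_sub (hq : 2 ≤ q) (ha0 : a 0 = 0)
    (ha : Set.InjOn a (Set.Iio q)) {n j : ℕ} (hj : j < n) :
    (mPoly a q n - mPoly a q j).rootMultiplicity 0 = multiplicity q (n - j) := by
  classical
  have hne : mPoly a q n - mPoly a q j ≠ 0 :=
    sub_ne_zero.mpr ((mPoly_injective hq ha0 ha).ne hj.ne')
  have hX : emultiplicity X (mPoly a q n - mPoly a q j) = emultiplicity q (n - j) :=
    emultiplicity_eq_emultiplicity_iff.mpr fun r => by
      rw [X_pow_dvd_mPoly_sub_iff hq ha0 ha, Nat.ModEq.comm, Nat.modEq_iff_dvd' hj.le]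
  have hfin : FiniteMultiplicity q (n - j) := Nat.finiteMultiplicity_iff.mpr ⟨by omega, by omega⟩
  rw [rootMultiplicity_eq_multiplicity, if_neg hne, map_zero, sub_zero]
  exact multiplicity_eq_of_emultiplicity_eq_some (hX.trans hfin.emultiplicity_eq_multiplicity)

end mPoly

theorem val_Pn_mn_general
    (p γ : ℕ) (hp : p.Prime) (hγ : 0 < γ) (q : ℕ) (hq : q = p ^ γ)
    (Fq : Type*) [Field Fq]
    (a : ℕ → Fq) (ha : Function.Bijective fun i : Fin q => a i)
    (ha0 : a 0 = 0) (n : ℕ) :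
    (∏ j ∈ Finset.range n, (mPoly a q n - mPoly a q j)).rootMultiplicity 0 =
      ∑ k ∈ Finset.range (Nat.digits q n).length,
        ((q ^ k - 1) / (q - 1)) * ((Nat.digits q n).getD k 0) := by
  have hq2 : 2 ≤ q := hq ▸ hp.two_le.trans (Nat.le_self_pow hγ.ne' p)
  have ha' : Set.InjOn a (Set.Iio q) := fun i hi i' hi' h =>
    congrArg Fin.val (ha.injective (a₁ := ⟨i, hi⟩) (a₂ := ⟨i', hi'⟩) h)
  rw [rootMultiplicity_prod _ _ (prod_ne_zero_iff.mpr fun j hj =>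
      sub_ne_zero.mpr ((mPoly_injective hq2 ha0 ha').ne (mem_range.mp hj).ne')),
    sum_congr rfl fun j hj => rootMultiplicity_zero_mPoly_sub hq2 ha0 ha' (mem_range.mp hj),
    Nat.sum_range_multiplicity_sub_eq_sum_div_pow (b := Nat.log q n + 1 + 1) (by omega)
      (by omega),
    sum_Ico_eq_sum_range]
  refine Nat.eq_of_mul_eq_mul_left (by omega : 0 < q - 1) ?_
  rw [Nat.sub_one_mul_sum_repunit_mul_digits_eq_sub_sum_digits q n (by omega),
    ← Nat.sub_one_mul_sum_log_div_pow_eq_sub_sum_digits, Nat.add_sub_cancel]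
  simp only [add_comm 1]

theorem val_Pn_mn
    (p γ : ℕ) (hp : p.Prime) (hγ : 0 < γ) (q : ℕ) (hq : q = p ^ γ)
    (Fq : Type*) [Field Fq] [Fintype Fq] (hcard : Fintype.card Fq = q)
    (a : ℕ → Fq) (ha : Function.Bijective fun i : Fin q => a i)
    (ha0 : a 0 = 0) (ha1 : a 1 = 1) (n : ℕ) :
    (∏ j ∈ Finset.range n, (mPoly a q n - mPoly a q j)).rootMultiplicity 0 =
      ∑ k ∈ Finset.range (Nat.digits q n).length,
        ((q ^ k - 1) / (q - 1)) * ((Nat.digits q n).getD k 0) :=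
  val_Pn_mn_general p γ hp hγ q hq Fq a ha ha0 n
end
end
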